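/- arXiv:2010.15421 — 3 statements merged into one kernel-verified Lean document; each statement's English description precedes it below -/
import Mathlib

section
/- (Push invariant, single step.) Let P = D^{-1}A be the row-stochastic random-walk matrix of a graph. Fix matrices Q^{(0)},…,Q^{(L)} and R^{(0)},…,R^{(L)} (each n×F), and define T^{(ℓ)} = D^r · (Q^{(ℓ)} + Σ_{t=0}^{ℓ} P^{ℓ-t} R^{(t)}). Suppose a push operation at level t ≤ ℓ−1, node u, feature k replaces R^{(t)} by R^{(t)} − R^{(t)}(u,k)·I_{uk} and replaces R^{(t+1)} by R^{(t+1)} + R^{(t)}(u,k) · (P I_{uk}) (i.e., each neighbor v of u gains R^{(t)}(u,k)/d(v) at entry (v,k)), while Q matrices are unchanged except Q^{(t)} gains R^{(t)}(u,k)·I_{uk} when t = ℓ. Then the quantity Q^{(ℓ)} + Σ_{t=0}^{ℓ} P^{ℓ-t} R^{(t)} is unchanged by the push operation. -/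
open Matrix Finset

/-- Push invariant, single step: a push at level `t ≤ ℓ - 1`, node `u`,
feature `k` (removing the residue `R t u k` at `(u,k)` of level `t` and distributing
`R t u k / d(v)` to each neighbor `v` at level `t+1`, i.e. adding
`R t u k • (P * I_{uk})` to `R (t+1)` where `P = D⁻¹A`) leaves the quantity
`Q ℓ + Σ_{s=0}^{ℓ} P^{ℓ-s} R^{(s)}` unchanged. -/
theorem push_invariant_single_step {n F : Type*} [Fintype n] [DecidableEq n]
    [Fintype F] [DecidableEq F]
    (P : Matrix n n ℝ) (L ℓ t : ℕ) (hℓ : ℓ ≤ L) (ht : t + 1 ≤ ℓ)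
    (Q R R' : ℕ → Matrix n F ℝ) (u : n) (k : F)
    (hR't : R' t = R t - R t u k • Matrix.single u k (1:ℝ))
    (hR't1 : R' (t + 1) = R (t + 1) + R t u k • (P * Matrix.single u k (1:ℝ)))
    (hR'other : ∀ s, s ≠ t → s ≠ t + 1 → R' s = R s) :
    Q ℓ + ∑ s ∈ Finset.range (ℓ + 1), P ^ (ℓ - s) * R' s
      = Q ℓ + ∑ s ∈ Finset.range (ℓ + 1), P ^ (ℓ - s) * R s := by
  set E := Matrix.single u k (1:ℝ)
  set X := R t u k • (P ^ (ℓ - t) * E) with hX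
  have hpow : P ^ (ℓ - (t + 1)) * (P * E) = P ^ (ℓ - t) * E := by
    rw [← Matrix.mul_assoc, ← pow_succ]
    congr 2
    omega
  have key : ∀ s ∈ Finset.range (ℓ + 1),
      P ^ (ℓ - s) * R' s = P ^ (ℓ - s) * R s +
        ((if s = t then -X else 0) + (if s = t + 1 then X else 0)) := by
    intro s _
    by_cases h1 : s = t
    · subst h1
      have : s ≠ s + 1 := by omega
      simp [hR't, Matrix.mul_sub, Matrix.mul_smul, this, hX, sub_eq_add_neg, Matrix.mul_add, Matrix.mul_neg]
    · by_cases h2 : s = t + 1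
      · subst h2
        simp [hR't1, Matrix.mul_add, Matrix.mul_smul, hpow, hX]
      · simp [hR'other s h1 h2, h1, h2]
  rw [Finset.sum_congr rfl key, Finset.sum_add_distrib, Finset.sum_add_distrib]
  have h1 : ∑ s ∈ Finset.range (ℓ + 1), (if s = t then -X else 0) = -X := by
    rw [Finset.sum_ite_eq' _ t]
    simp [Finset.mem_range]; omega
  have h2 : ∑ s ∈ Finset.range (ℓ + 1), (if s = t + 1 then X else 0) = X := by
    rw [Finset.sum_ite_eq' _ (t + 1)]
    simp [Finset.mem_range]; omega
  rw [h1, h2]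
  abel
end

section
/- (Reverse push invariant.) With initialization Q^{(ℓ)} = 0 for all ℓ = 0,…,L and R^{(0)} = D^{-r}X, R^{(ℓ)} = 0 for ℓ ≥ 1, and after any finite sequence of push operations as in the bidirectional propagation algorithm, the identity (D^{r-1}AD^{-r})^ℓ X = D^r · (Q^{(ℓ)} + Σ_{t=0}^{ℓ} (D^{-1}A)^{ℓ-t} R^{(t)}) holds for every ℓ = 0,…,L. -/
open Matrix Finset

/-- A push operation of the bidirectional propagation algorithm on a state
`(Q, R)` of reserve/residue matrices: at some level `t < L`, node `u` and feature `k`,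
with residue `ρ = R t u k`, it adds `ρ` to `Q t (u,k)`, sets `R t (u,k)` to `0`, and
adds `ρ / d(v)` to `R (t+1) (v,k)` for each neighbor `v` of `u` (i.e. adds
`ρ • (P * I_{uk})` to `R (t+1)`, where `P = D⁻¹A`). -/
def PushStep {n F : Type*} [Fintype n] [DecidableEq n] [Fintype F] [DecidableEq F]
    (P : Matrix n n ℝ) (L : ℕ)
    (st st' : (ℕ → Matrix n F ℝ) × (ℕ → Matrix n F ℝ)) : Prop :=
  ∃ (t : ℕ) (u : n) (k : F), t < L ∧
    st'.1 = Function.update st.1 t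
      (st.1 t + st.2 t u k • Matrix.single u k (1:ℝ)) ∧
    st'.2 = fun s =>
      if s = t then st.2 t - st.2 t u k • Matrix.single u k (1:ℝ)
      else if s = t + 1 then st.2 (t + 1) + st.2 t u k • (P * Matrix.single u k (1:ℝ))
      else st.2 s

lemma push_preserves {n F : Type*} [Fintype n] [DecidableEq n]
    [Fintype F] [DecidableEq F]
    (P : Matrix n n ℝ) (L : ℕ) (st st' : (ℕ → Matrix n F ℝ) × (ℕ → Matrix n F ℝ))
    (h : PushStep P L st st') (ℓ : ℕ) :
    st'.1 ℓ + ∑ t ∈ Finset.range (ℓ + 1), P ^ (ℓ - t) * st'.2 t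
      = st.1 ℓ + ∑ t ∈ Finset.range (ℓ + 1), P ^ (ℓ - t) * st.2 t := by
  obtain ⟨t, u, k, htL, hQ, hR⟩ := h
  set ρ := st.2 t u k
  set E := Matrix.single u k (1:ℝ)
  have hsplit : ∀ s, P ^ (ℓ - s) * st'.2 s
      = P ^ (ℓ - s) * st.2 s
        + ((if s = t then P ^ (ℓ - t) * (-(ρ • E)) else 0)
          + (if s = t + 1 then P ^ (ℓ - (t+1)) * (ρ • (P * E)) else 0)) := by
    intro s
    rw [hR]
    by_cases h1 : s = t
    · subst h1
      have h2 : ¬ (s = s + 1) := by omega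
      simp only [h2, if_true, if_false, ite_true, ite_false, sub_eq_add_neg, add_zero,
        zero_add, Matrix.mul_add]
    · by_cases h2 : s = t + 1
      · subst h2
        simp only [h1, if_false, ite_true, ite_false, zero_add, Matrix.mul_add]
      · simp [h1, h2]
  have hsum : ∑ s ∈ Finset.range (ℓ + 1), P ^ (ℓ - s) * st'.2 s
      = (∑ s ∈ Finset.range (ℓ + 1), P ^ (ℓ - s) * st.2 s)
        + ((if t ∈ Finset.range (ℓ + 1) then P ^ (ℓ - t) * (-(ρ • E)) else 0)
          + (if t + 1 ∈ Finset.range (ℓ + 1) then P ^ (ℓ - (t+1)) * (ρ • (P * E)) else 0)) := by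
    simp only [hsplit, Finset.sum_add_distrib, Finset.sum_ite_eq' (Finset.range (ℓ+1))]
  rw [hsum, hQ]
  rcases lt_trichotomy ℓ t with hlt | heq | hgt
  · rw [Function.update_of_ne (by omega)]
    have h1 : t ∉ Finset.range (ℓ + 1) := by simp; omega
    have h2 : t + 1 ∉ Finset.range (ℓ + 1) := by simp; omega
    simp [h1, h2]
  · subst heq
    rw [Function.update_self]
    have h1 : ℓ ∈ Finset.range (ℓ + 1) := by simp
    have h2 : ℓ + 1 ∉ Finset.range (ℓ + 1) := by simp
    have hkey : P ^ (ℓ - ℓ) * (-(ρ • E)) = -(ρ • E) := by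
      simp
    simp only [h1, h2, if_true, if_false, add_zero, hkey]
    abel
  · rw [Function.update_of_ne (by omega)]
    have h1 : t ∈ Finset.range (ℓ + 1) := by simp; omega
    have h2 : t + 1 ∈ Finset.range (ℓ + 1) := by simp; omega
    have hpow : P ^ (ℓ - (t+1)) * P = P ^ (ℓ - t) := by
      rw [← pow_succ]
      congr 1
      omega
    have hkey : P ^ (ℓ - (t + 1)) * (ρ • (P * E)) = P ^ (ℓ - t) * (ρ • E) := by
      rw [Matrix.mul_smul, Matrix.mul_smul, ← Matrix.mul_assoc, hpow]
    have hkey2 : P ^ (ℓ - t) * (-(ρ • E)) = -(P ^ (ℓ - t) * (ρ • E)) := by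
      rw [Matrix.mul_neg]
    simp only [h1, h2, if_true, hkey, hkey2]
    abel

/-- Reverse push invariant: starting from `Q^{(ℓ)} = 0` for all `ℓ`,
`R^{(0)} = D^{-r} X` and `R^{(ℓ)} = 0` for `ℓ ≥ 1`, after any finite sequence of push
operations, `(D^{r-1} A D^{-r})^ℓ X = D^r (Q^{(ℓ)} + Σ_{t=0}^{ℓ} (D⁻¹A)^{ℓ-t} R^{(t)})`
holds for every `ℓ ≤ L`. -/
theorem reverse_push_invariant {n F : Type*} [Fintype n] [DecidableEq n]
    [Fintype F] [DecidableEq F]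
    (A : Matrix n n ℝ) (d : n → ℝ) (hd : ∀ i, 0 < d i)
    (X : Matrix n F ℝ) (r : ℝ) (hr0 : 0 ≤ r) (hr1 : r ≤ 1) (L : ℕ)
    (st : (ℕ → Matrix n F ℝ) × (ℕ → Matrix n F ℝ))
    (hreach : Relation.ReflTransGen
      (PushStep (Matrix.diagonal (fun i => (d i)⁻¹) * A) L)
      (⟨fun _ => 0,
        fun s => if s = 0 then Matrix.diagonal (fun i => (d i) ^ (-r)) * X else 0⟩)
      st) :
    ∀ ℓ ≤ L,
      (Matrix.diagonal (fun i => (d i) ^ (r - 1)) * A *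
          Matrix.diagonal (fun i => (d i) ^ (-r))) ^ ℓ * X
        = Matrix.diagonal (fun i => (d i) ^ r) *
            (st.1 ℓ + ∑ t ∈ Finset.range (ℓ + 1),
              (Matrix.diagonal (fun i => (d i)⁻¹) * A) ^ (ℓ - t) * st.2 t) := by
  set Dr : Matrix n n ℝ := Matrix.diagonal (fun i => (d i) ^ r) with hDr
  set Dmr : Matrix n n ℝ := Matrix.diagonal (fun i => (d i) ^ (-r)) with hDmr
  set P : Matrix n n ℝ := Matrix.diagonal (fun i => (d i)⁻¹) * A with hP
  have hDrDmr : Dr * Dmr = 1 := by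
    rw [hDr, hDmr, Matrix.diagonal_mul_diagonal]
    have : (fun i => d i ^ r * d i ^ (-r)) = fun _ : n => (1:ℝ) := by
      funext i
      rw [← Real.rpow_add (hd i), add_neg_cancel, Real.rpow_zero]
    rw [this, Matrix.diagonal_one]
  have hDmrDr : Dmr * Dr = 1 := by
    rw [hDr, hDmr, Matrix.diagonal_mul_diagonal]
    have : (fun i => d i ^ (-r) * d i ^ r) = fun _ : n => (1:ℝ) := by
      funext i
      rw [← Real.rpow_add (hd i), neg_add_cancel, Real.rpow_zero]
    rw [this, Matrix.diagonal_one]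
  have hBd : Matrix.diagonal (fun i => (d i) ^ (r - 1)) * A * Dmr = Dr * P * Dmr := by
    rw [hP, hDr, ← Matrix.mul_assoc, Matrix.diagonal_mul_diagonal]
    have : (fun i => d i ^ r * (d i)⁻¹) = fun i => d i ^ (r - 1) := by
      funext i
      rw [sub_eq_add_neg, Real.rpow_add (hd i), Real.rpow_neg_one]
    rw [this]
  have hpow : ∀ ℓ : ℕ,
      (Matrix.diagonal (fun i => (d i) ^ (r - 1)) * A * Dmr) ^ ℓ = Dr * P ^ ℓ * Dmr := by
    intro ℓ
    rw [hBd]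
    induction ℓ with
    | zero => simp [hDrDmr]
    | succ m ih =>
      rw [pow_succ, ih, pow_succ]
      calc Dr * P ^ m * Dmr * (Dr * P * Dmr)
          = Dr * P ^ m * (Dmr * Dr) * P * Dmr := by
            simp only [Matrix.mul_assoc]
        _ = Dr * (P ^ m * P) * Dmr := by
            rw [hDmrDr]
            simp only [Matrix.mul_assoc, Matrix.mul_one, Matrix.one_mul]
  induction hreach with
  | refl =>
    intro ℓ _
    rw [hpow ℓ]
    have hsum : ∑ t ∈ Finset.range (ℓ + 1),
        P ^ (ℓ - t) * (if t = 0 then Dmr * X else 0) = P ^ ℓ * (Dmr * X) := by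
      rw [Finset.sum_eq_single 0]
      · simp
      · intro b _ hb; simp [hb]
      · simp
    simp only [hsum]
    simp [Matrix.mul_assoc]
  | tail hab hstep ih =>
    intro ℓ hℓ
    rw [ih ℓ hℓ, push_preserves P L _ _ hstep ℓ]
end

section
/- (Approximation guarantee of reserves.) Suppose the push invariant T^{(ℓ)} = D^r(Q^{(ℓ)} + Σ_{t=0}^{ℓ} P^{ℓ-t} R^{(t)}) holds with P = D^{-1}A row-stochastic, all residue entries satisfying 0 ≤ R^{(t)}(u,k) ≤ r_max, and Q^{(ℓ)} nonnegative. Then for every node s and feature k: T^{(ℓ)}(s,k) − d(s)^r · (ℓ+1) · r_max ≤ (D^r Q^{(ℓ)})(s,k) ≤ T^{(ℓ)}(s,k). -/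
open Matrix Finset

lemma pow_nonneg_entries {n : Type*} [Fintype n] [DecidableEq n]
    (P : Matrix n n ℝ) (hP0 : ∀ i j, 0 ≤ P i j) (m : ℕ) :
    ∀ i j, 0 ≤ (P ^ m) i j := by
  induction m with
  | zero => intro i j; simp [Matrix.one_apply]; positivity
  | succ m ih =>
      intro i j
      rw [pow_succ, Matrix.mul_apply]
      exact Finset.sum_nonneg fun x _ => mul_nonneg (ih i x) (hP0 x j)

lemma pow_row_sum {n : Type*} [Fintype n] [DecidableEq n]
    (P : Matrix n n ℝ) (hP1 : ∀ i, ∑ j, P i j = 1) (m : ℕ) :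
    ∀ i, ∑ j, (P ^ m) i j = 1 := by
  induction m with
  | zero => intro i; simp [Matrix.one_apply]
  | succ m ih =>
      intro i
      simp only [pow_succ, Matrix.mul_apply]
      rw [Finset.sum_comm]
      calc ∑ x, ∑ j, (P ^ m) i x * P x j
          = ∑ x, (P ^ m) i x * ∑ j, P x j := by
            simp [Finset.mul_sum]
        _ = 1 := by simp [hP1, ih i]

/-- Approximation guarantee of reserves: if the push invariant
`T^{(ℓ)} = D^r (Q^{(ℓ)} + Σ_{t=0}^{ℓ} P^{ℓ-t} R^{(t)})` holds with `P` row-stochastic,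
residues in `[0, r_max]`, and `Q^{(ℓ)}` nonnegative, then for every node `s` and
feature `k`:
`T^{(ℓ)}(s,k) - d(s)^r (ℓ+1) r_max ≤ (D^r Q^{(ℓ)})(s,k) ≤ T^{(ℓ)}(s,k)`. -/
theorem reserve_approximation_guarantee {n F : Type*} [Fintype n] [DecidableEq n]
    [Fintype F]
    (P : Matrix n n ℝ) (hP0 : ∀ i j, 0 ≤ P i j) (hP1 : ∀ i, ∑ j, P i j = 1)
    (d : n → ℝ) (hd : ∀ i, 0 < d i) (r : ℝ) (L ℓ : ℕ) (hℓ : ℓ ≤ L)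
    (Q : Matrix n F ℝ) (R : ℕ → Matrix n F ℝ) (rmax : ℝ)
    (hR : ∀ t u k, 0 ≤ R t u k ∧ R t u k ≤ rmax) (hQ : ∀ u k, 0 ≤ Q u k)
    (T : Matrix n F ℝ)
    (hT : T = Matrix.diagonal (fun i => (d i) ^ r) *
      (Q + ∑ t ∈ Finset.range (ℓ + 1), P ^ (ℓ - t) * R t)) :
    ∀ (s : n) (k : F),
      T s k - (d s) ^ r * (ℓ + 1) * rmax
          ≤ (Matrix.diagonal (fun i => (d i) ^ r) * Q) s k ∧
      (Matrix.diagonal (fun i => (d i) ^ r) * Q) s k ≤ T s k := by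
  intro s k
  have hds : (0:ℝ) ≤ (d s) ^ r := Real.rpow_nonneg (le_of_lt (hd s)) r
  -- key quantity
  set S : ℝ := ∑ t ∈ Finset.range (ℓ + 1), (P ^ (ℓ - t) * R t) s k with hS
  have hTsk : T s k = (d s) ^ r * (Q s k + S) := by
    rw [hT]
    rw [Matrix.diagonal_mul]
    simp [hS, Matrix.add_apply, Matrix.sum_apply]
  have hdQ : (Matrix.diagonal (fun i => (d i) ^ r) * Q) s k = (d s) ^ r * Q s k := by
    rw [Matrix.diagonal_mul]
  have hterm : ∀ t, 0 ≤ (P ^ (ℓ - t) * R t) s k ∧ (P ^ (ℓ - t) * R t) s k ≤ rmax := by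
    intro t
    constructor
    · rw [Matrix.mul_apply]
      exact Finset.sum_nonneg fun x _ =>
        mul_nonneg (pow_nonneg_entries P hP0 _ s x) (hR t x k).1
    · rw [Matrix.mul_apply]
      calc ∑ x, (P ^ (ℓ - t)) s x * R t x k
          ≤ ∑ x, (P ^ (ℓ - t)) s x * rmax :=
            Finset.sum_le_sum fun x _ =>
              mul_le_mul_of_nonneg_left (hR t x k).2 (pow_nonneg_entries P hP0 _ s x)
        _ = rmax := by rw [← Finset.sum_mul, pow_row_sum P hP1 _ s, one_mul]
  have hS0 : 0 ≤ S := Finset.sum_nonneg fun t _ => (hterm t).1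
  have hSle : S ≤ (ℓ + 1) * rmax := by
    calc S ≤ ∑ t ∈ Finset.range (ℓ + 1), rmax :=
          Finset.sum_le_sum fun t _ => (hterm t).2
      _ = (ℓ + 1) * rmax := by simp [mul_comm]
  constructor
  · rw [hTsk, hdQ]
    nlinarith [mul_le_mul_of_nonneg_left hSle hds]
  · rw [hTsk, hdQ]
    nlinarith [mul_le_mul_of_nonneg_left hS0 hds]
end
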